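/- arXiv:1203.3222 — 3 statements merged into one kernel-verified Lean document; each statement's English description precedes it below -/
import Mathlib

section
/- If f : ℝ → ℝ is an n-monomial (i.e. (1/n!) Δ_h^n f(x) = f(h) for all x, h), then for every h ≠ 0 and every rational r, f(r h) = r^n f(h). -/
noncomputable def fdiff (h : ℝ) (f : ℝ → ℝ) : ℝ → ℝ := fun x => f (x + h) - f x

def IsMonomial (n : ℕ) (f : ℝ → ℝ) : Prop :=
  ∀ x h : ℝ, (1 / (n.factorial : ℝ)) * ((fdiff h)^[n] f) x = f h

/-!
Since `Δ_[m • h] f y = ∑_{j < m} Δ_[h] f (y + j • h)` and the `n`-th differences of a monomial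
do not depend on the base point, iterating gives `Δ_[m • h] ^[n] f = m ^ n • Δ_[h] ^[n] f`;
similarly `Δ_[-h] ^[n] f` is `(-1) ^ n` times a shifted `Δ_[h] ^[n] f`. Comparing with
`Δ_[t] ^[n] f = n! f t` yields `f (k t) = k ^ n f t` for integers `k`, and writing `r = p / q`
with `t = h / q` gives the rational case.
-/

open fwdDiff Finset Function Nat

section ForwardDifference

variable {M G : Type*} [AddCommGroup G]

lemma fwdDiff_nsmul [AddCommMonoid M] (h : M) (f : M → G) (m : ℕ) (y : M) :
    Δ_[m • h] f y = ∑ j ∈ range m, Δ_[h] f (y + j • h) := by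
  induction m with
  | zero => simp [fwdDiff]
  | succ m ih =>
    rw [sum_range_succ, ← ih]
    simp only [fwdDiff, succ_nsmul, ← add_assoc]
    abel

lemma fwdDiff_nsmul_iter_eq_of_iter_eq_const [AddCommMonoid M] (h : M) (m n : ℕ) {f : M → G}
    {c : G} (hf : ∀ x, Δ_[h] ^[n] f x = c) (x : M) : Δ_[m • h] ^[n] f x = m ^ n • c := by
  induction n generalizing f c with
  | zero => simpa using hf x
  | succ n ih =>
    have hsum : Δ_[m • h] f = ∑ j ∈ range m, fun y => Δ_[h] f (y + j • h) := by
      ext y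
      simp only [fwdDiff_nsmul, Finset.sum_apply]
    have hstep (x : M) : Δ_[h] ^[n] (Δ_[m • h] f) x = m • c := by
      simp only [hsum, fwdDiff_iter_finsetSum, Finset.sum_apply, fwdDiff_iter_comp_add,
        ← iterate_succ_apply, hf, sum_const, card_range]
    rw [iterate_succ_apply, ih hstep, pow_succ, mul_smul]

lemma fwdDiff_neg_iter [AddCommGroup M] (h : M) (f : M → G) (n : ℕ) (x : M) :
    Δ_[-h] ^[n] f x = (-1 : ℤ) ^ n • Δ_[h] ^[n] f (x - n • h) := by
  induction n generalizing f x with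
  | zero => simp
  | succ n ih =>
    have hneg : Δ_[-h] f = (-1 : ℤ) • Δ_[h] (fun y => f (y + -h)) := by
      ext y
      simp [fwdDiff]
    rw [iterate_succ_apply, ih, hneg, fwdDiff_iter_const_smul, Pi.smul_apply,
      ← iterate_succ_apply, fwdDiff_iter_comp_add, smul_smul, ← pow_succ, succ_nsmul,
      sub_add_eq_sub_sub, sub_eq_add_neg (x - n • h)]

end ForwardDifference

namespace IsMonomial

variable {n : ℕ} {f : ℝ → ℝ}

lemma iterate_fwdDiff_eq (hf : IsMonomial n f) (t x : ℝ) : Δ_[t] ^[n] f x = n ! * f t := by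
  have hx : (1 / (n ! : ℝ)) * Δ_[t] ^[n] f x = f t := hf x t
  rw [← hx]
  field_simp

lemma map_natCast_mul (hf : IsMonomial n f) (m : ℕ) (t : ℝ) : f (m * t) = m ^ n * f t := by
  have key := fwdDiff_nsmul_iter_eq_of_iter_eq_const t m n (hf.iterate_fwdDiff_eq t) 0
  rw [hf.iterate_fwdDiff_eq, nsmul_eq_mul, nsmul_eq_mul] at key
  push_cast at key
  have hfac : (n ! : ℝ) ≠ 0 := by positivity
  exact mul_left_cancel₀ hfac (by linear_combination key)

lemma map_neg (hf : IsMonomial n f) (t : ℝ) : f (-t) = (-1) ^ n * f t := by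
  have key := fwdDiff_neg_iter t f n 0
  rw [hf.iterate_fwdDiff_eq, hf.iterate_fwdDiff_eq, zsmul_eq_mul] at key
  push_cast at key
  have hfac : (n ! : ℝ) ≠ 0 := by positivity
  exact mul_left_cancel₀ hfac (by linear_combination key)

lemma map_intCast_mul (hf : IsMonomial n f) (k : ℤ) (t : ℝ) : f (k * t) = k ^ n * f t := by
  obtain ⟨m, rfl | rfl⟩ := k.eq_nat_or_neg
  · exact_mod_cast hf.map_natCast_mul m t
  · push_cast
    rw [neg_mul, hf.map_neg, hf.map_natCast_mul, neg_pow]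
    ring

lemma map_ratCast_mul (hf : IsMonomial n f) (r : ℚ) (h : ℝ) : f (r * h) = r ^ n * f h := by
  set t := h / r.den
  have hh : h = r.den * t := by simp only [t]; field_simp
  have hrh : (r : ℝ) * h = r.num * t := by rw [Rat.cast_def, hh]; field_simp
  rw [hrh, hf.map_intCast_mul, hh, hf.map_natCast_mul, Rat.cast_def, div_pow]
  field_simp

end IsMonomial

theorem stmt3_general (n : ℕ) (f : ℝ → ℝ) (hf : IsMonomial n f) (h : ℝ) (r : ℚ) :
    f ((r : ℝ) * h) = (r : ℝ) ^ n * f h :=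
  hf.map_ratCast_mul r h

theorem stmt3 (n : ℕ) (f : ℝ → ℝ) (hf : IsMonomial n f) (h : ℝ) (hh : h ≠ 0) (r : ℚ) :
    f ((r : ℝ) * h) = (r : ℝ) ^ n * f h :=
  stmt3_general n f hf h r
end

section
/- If f₁ is an n₁-monomial and f₂ is an n₂-monomial (fᵢ : ℝ → ℝ), then the product f₁·f₂ is an (n₁+n₂)-monomial. -/
open Finset

lemma fdiff_iterate_succ_apply (h : ℝ) (f : ℝ → ℝ) (n : ℕ) (x : ℝ) :
    (fdiff h)^[n + 1] f x = (fdiff h)^[n] f (x + h) - (fdiff h)^[n] f x := by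
  rw [Function.iterate_succ_apply']
  rfl

lemma fdiff_iterate_mul (h : ℝ) (f g : ℝ → ℝ) (N : ℕ) (x : ℝ) :
    (fdiff h)^[N] (fun y => f y * g y) x =
      ∑ p ∈ antidiagonal N,
        (N.choose p.1 : ℝ) * ((fdiff h)^[p.1] f x * (fdiff h)^[p.2] g (x + p.1 * h)) := by
  induction N generalizing x with
  | zero => simp
  | succ N ih =>
    rw [fdiff_iterate_succ_apply, ih, ih, sum_antidiagonal_choose_succ_mul
      (fun i j => (fdiff h)^[i] f x * (fdiff h)^[j] g (x + i * h)), ← sum_sub_distrib,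
      ← sum_add_distrib]
    refine sum_congr rfl fun p hp => ?_
    rw [HasAntidiagonal.mem_antidiagonal] at hp
    rw [Nat.choose_symm_of_eq_add hp.symm, fdiff_iterate_succ_apply _ f,
      fdiff_iterate_succ_apply _ g]
    push_cast
    ring_nf

namespace IsMonomial

variable {n : ℕ} {f : ℝ → ℝ}

lemma fdiff_iterate_eq (hf : IsMonomial n f) (x h : ℝ) :
    (fdiff h)^[n] f x = n.factorial * f h := by
  rw [← hf x h, ← mul_assoc, mul_one_div_cancel (by positivity), one_mul]

lemma fdiff_iterate_eq_zero_of_lt (hf : IsMonomial n f) {k : ℕ} (hk : n < k) (x h : ℝ) :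
    (fdiff h)^[k] f x = 0 := by
  have hvanish : (fdiff h)^[n + 1] f = 0 := by
    funext y
    rw [fdiff_iterate_succ_apply, hf.fdiff_iterate_eq, hf.fdiff_iterate_eq, sub_self, Pi.zero_apply]
  have hfix : fdiff h 0 = 0 := by
    funext y
    simp [fdiff]
  obtain ⟨m, rfl⟩ : ∃ m, k = m + (n + 1) := ⟨k - (n + 1), by omega⟩
  rw [Function.iterate_add_apply, hvanish, Function.iterate_fixed hfix, Pi.zero_apply]

end IsMonomial

theorem stmt11 (n₁ n₂ : ℕ) (f₁ f₂ : ℝ → ℝ)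
    (h₁ : IsMonomial n₁ f₁) (h₂ : IsMonomial n₂ f₂) :
    IsMonomial (n₁ + n₂) (fun x => f₁ x * f₂ x) := by
  intro x h
  rw [fdiff_iterate_mul, sum_eq_single (n₁, n₂)]
  · rw [h₁.fdiff_iterate_eq, h₂.fdiff_iterate_eq, ← Nat.add_choose_mul_factorial_mul_factorial,
      Nat.choose_symm_add]
    have hchoose : ((n₁ + n₂).choose n₂ : ℝ) ≠ 0 :=
      Nat.cast_ne_zero.mpr (Nat.choose_pos (Nat.le_add_left n₂ n₁)).ne'
    push_cast
    field_simp
  · intro p hp hne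
    rw [HasAntidiagonal.mem_antidiagonal] at hp
    have hbeyond : n₁ < p.1 ∨ n₂ < p.2 := by
      by_contra!
      exact hne (Prod.ext (by omega) (by omega))
    rcases hbeyond with hlt | hlt
    · rw [h₁.fdiff_iterate_eq_zero_of_lt hlt, zero_mul, mul_zero]
    · rw [h₂.fdiff_iterate_eq_zero_of_lt hlt, mul_zero, mul_zero]
  · simp
end

section
/- Let L : ℝ → ℝ be an additive function with dense graph in ℝ² (e.g. a Hamel-basis construction), and let n ≥ 2. Then f(x) = x^{n-1} L(x) is an n-monomial whose graph closure is all of ℝ²; equivalently sup_{h ∈ [1,2]} f(h)/h^n = +∞ and inf_{h ∈ [1,2]} f(h)/h^n = -∞. -/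
/-!
Additivity gives `Δ_h (P * L) = Δ_h P * L + P (· + h) * L h`, so `Δ_h^[m+1] (P * L)` is
`Δ_h^[m+1] P * L` plus `(m + 1)` copies of `Δ_h^[m] P (· + h) * L h`. For `P = x ^ m` the first
term vanishes and `Δ_h^[m] P = m! h ^ m`, which is the monomial identity in degree `m + 1`.

The graph of `x ^ m * L x` is the image of the graph of `L` under the continuous map
`(x, y) ↦ (x, x ^ m * y)`, whose range contains the dense set `x ≠ 0`; hence it is dense. On
`[1, 2]` the ratio `h ^ m * L h / h ^ (m + 1)` is `L h / h`, which is unbounded in both directions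
because the graph of `L` meets every box `(1, 2) × (c, ∞)` and `(1, 2) × (-∞, c)`.
-/

open Finset Function Set
open scoped Nat

section Powers

variable {R : Type*} [CommRing R]

lemma fwdDiff_pow (h : R) (j : ℕ) :
    fwdDiff h (fun x : R ↦ x ^ j) =
      ∑ i ∈ range j, (j.choose i * h ^ (j - i)) • fun x : R ↦ x ^ i := by
  ext x
  simp only [fwdDiff, add_pow, sum_range_succ, Nat.choose_self, Nat.sub_self, pow_zero,
    Nat.cast_one, mul_one, add_sub_cancel_right, Finset.sum_apply, Pi.smul_apply, smul_eq_mul]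
  exact sum_congr rfl fun i _ ↦ by ring

lemma fwdDiff_iter_pow_of_lt (h : R) {j n : ℕ} (hjn : j < n) :
    (fwdDiff h)^[n] (fun x : R ↦ x ^ j) = 0 := by
  induction n generalizing j with
  | zero => omega
  | succ n ih =>
    rw [iterate_succ_apply, fwdDiff_pow, fwdDiff_iter_finsetSum]
    exact sum_eq_zero fun i hi ↦ by
      rw [fwdDiff_iter_const_smul, ih (by have := mem_range.1 hi; omega), smul_zero]

lemma fwdDiff_iter_pow_self (h : R) (n : ℕ) :
    (fwdDiff h)^[n] (fun x : R ↦ x ^ n) = fun _ ↦ n ! * h ^ n := by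
  induction n with
  | zero => ext; simp
  | succ n ih =>
    have lower : ∑ i ∈ range n, (fwdDiff h)^[n] (((n + 1).choose i * h ^ (n + 1 - i)) •
        fun x : R ↦ x ^ i) = 0 := sum_eq_zero fun i hi ↦ by
      rw [fwdDiff_iter_const_smul, fwdDiff_iter_pow_of_lt h (mem_range.1 hi), smul_zero]
    rw [iterate_succ_apply, fwdDiff_pow, fwdDiff_iter_finsetSum, sum_range_succ, lower,
      zero_add, fwdDiff_iter_const_smul, ih]
    ext
    simp only [Nat.choose_succ_self_right, Nat.cast_add, Nat.cast_one, add_tsub_cancel_left,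
      pow_succ, pow_zero, one_mul, Pi.smul_apply, smul_eq_mul, Nat.factorial_succ, Nat.cast_mul]
    ring

end Powers

lemma fwdDiff_iter_mul_of_additive {M R : Type*} [AddCommMonoid M] [CommRing R] {L : M → R}
    (hL : ∀ x y, L (x + y) = L x + L y) (h : M) (P : M → R) (m : ℕ) :
    (fwdDiff h)^[m + 1] (fun x ↦ P x * L x) =
      fun x ↦ (fwdDiff h)^[m + 1] P x * L x + (m + 1) * (fwdDiff h)^[m] P (x + h) * L h := by
  induction m with
  | zero =>
    ext x
    simp only [zero_add, iterate_one, fwdDiff, hL, Nat.cast_zero, iterate_zero, id_eq, one_mul]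
    ring
  | succ m ih =>
    rw [iterate_succ_apply', ih]
    ext x
    rw [iterate_succ_apply' _ (m + 1), iterate_succ_apply' _ m]
    simp only [fwdDiff, hL]
    push_cast
    ring

lemma fdiff_eq_fwdDiff : fdiff = fwdDiff := rfl

theorem isMonomial_pow_mul_of_additive {L : ℝ → ℝ} (hL : ∀ x y, L (x + y) = L x + L y)
    (m : ℕ) :
    IsMonomial (m + 1) (fun x ↦ x ^ m * L x) := by
  intro x h
  rw [fdiff_eq_fwdDiff, fwdDiff_iter_mul_of_additive hL, fwdDiff_iter_pow_of_lt h m.lt_succ_self,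
    fwdDiff_iter_pow_self, Nat.factorial_succ]
  simp only [Pi.zero_apply, zero_mul, zero_add]
  field_simp
  push_cast
  ring

theorem Dense.graph_mul {X 𝕜 : Type*} [TopologicalSpace X] [Field 𝕜] [TopologicalSpace 𝕜]
    [ContinuousMul 𝕜] {L g : X → 𝕜} (hL : Dense {p : X × 𝕜 | p.2 = L p.1}) (hg : Continuous g)
    (hg0 : Dense {x | g x ≠ 0}) : Dense {p : X × 𝕜 | p.2 = g p.1 * L p.1} := by
  let e : X × 𝕜 → X × 𝕜 := fun p ↦ (p.1, g p.1 * p.2)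
  have hrange : DenseRange e := (hg0.prod dense_univ).mono <| by
    rintro ⟨x, y⟩ ⟨hx, -⟩
    exact ⟨(x, y / g x), by simp [e, mul_div_cancel₀ _ hx]⟩
  refine (hrange.dense_image (by fun_prop) hL).mono ?_
  rintro _ ⟨p, hp, rfl⟩
  simp [e, hp.out]

lemma exists_mem_Icc_lt_div_self {L : ℝ → ℝ} (hL : Dense {p : ℝ × ℝ | p.2 = L p.1}) (M : ℝ) :
    ∃ h ∈ Icc (1 : ℝ) 2, M < L h / h := by
  obtain ⟨p, hp, ⟨h1, h2⟩, hM⟩ := hL.exists_mem_open (isOpen_Ioo.prod isOpen_Ioi)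
    (⟨(3 / 2, 2 * |M| + 1), by norm_num⟩ : (Ioo (1 : ℝ) 2 ×ˢ Ioi (2 * |M|)).Nonempty)
  refine ⟨p.1, ⟨h1.le, h2.le⟩, ?_⟩
  rw [lt_div_iff₀ (by linarith), ← hp.out]
  nlinarith [le_abs_self M, abs_nonneg M, hM.out]

lemma exists_mem_Icc_div_self_lt {L : ℝ → ℝ} (hL : Dense {p : ℝ × ℝ | p.2 = L p.1}) (M : ℝ) :
    ∃ h ∈ Icc (1 : ℝ) 2, L h / h < M := by
  have hneg : Dense {p : ℝ × ℝ | p.2 = -1 * L p.1} :=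
    hL.graph_mul continuous_const (by simp)
  obtain ⟨h, hh, hM⟩ := exists_mem_Icc_lt_div_self (L := fun x ↦ -1 * L x) hneg (-M)
  refine ⟨h, hh, ?_⟩
  rw [neg_one_mul, neg_div] at hM
  linarith

theorem stmt16 (L : ℝ → ℝ) (hadd : ∀ x y : ℝ, L (x + y) = L x + L y)
    (hdense : Dense {p : ℝ × ℝ | p.2 = L p.1}) (n : ℕ) (hn : 2 ≤ n) :
    IsMonomial n (fun x => x ^ (n - 1) * L x) ∧
    closure {p : ℝ × ℝ | p.2 = p.1 ^ (n - 1) * L p.1} = Set.univ ∧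
    (∀ M : ℝ, ∃ h ∈ Set.Icc (1 : ℝ) 2, M < h ^ (n - 1) * L h / h ^ n) ∧
    (∀ M : ℝ, ∃ h ∈ Set.Icc (1 : ℝ) 2, h ^ (n - 1) * L h / h ^ n < M) := by
  obtain ⟨m, rfl⟩ : ∃ m, n = m + 1 := ⟨n - 1, by omega⟩
  simp only [Nat.add_sub_cancel]
  have hratio : ∀ h ∈ Icc (1 : ℝ) 2, h ^ m * L h / h ^ (m + 1) = L h / h := fun h hh ↦ by
    have : h ≠ 0 := by linarith [hh.1]
    field_simp
    ring
  refine ⟨isMonomial_pow_mul_of_additive hadd m,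
    (hdense.graph_mul (continuous_pow m)
      ((dense_compl_singleton 0).mono fun x hx ↦ pow_ne_zero m hx)).closure_eq,
    fun M ↦ ?_, fun M ↦ ?_⟩
  · obtain ⟨h, hh, hM⟩ := exists_mem_Icc_lt_div_self hdense M
    exact ⟨h, hh, by rwa [hratio h hh]⟩
  · obtain ⟨h, hh, hM⟩ := exists_mem_Icc_div_self_lt hdense M
    exact ⟨h, hh, by rwa [hratio h hh]⟩
end
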